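/- For every ε with 0 < ε ≤ 1/(2√2), the operator M₁ = ε (|00⟩ + |11⟩)(⟨00| + ⟨11|) on ℂ² ⊗ ℂ² is an effect that is not separable positive (hence entangled), and yet with M = 2M₁ − 𝟙 the dual Bell–CHSH inequality −2 ≤ D ≤ 2 holds for all qubit states ρ₀^A, ρ₁^A, ρ₀^B, ρ₁^B, where D = E(ρ₀^A, ρ₀^B, M) + E(ρ₀^A, ρ₁^B, M) + E(ρ₁^A, ρ₀^B, M) − E(ρ₁^A, ρ₁^B, M). -/

import Mathlib

open Matrix Kronecker ComplexOrder

/-- A quantum state: positive semidefinite matrix of trace one. -/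
def IsState {d : ℕ} (ρ : Matrix (Fin d) (Fin d) ℂ) : Prop :=
  ρ.PosSemidef ∧ ρ.trace = 1

/-- Separable positivity: a finite sum of Kronecker products of
positive semidefinite matrices. -/
def SepPos {dA dB : ℕ} (S : Matrix (Fin dA × Fin dB) (Fin dA × Fin dB) ℂ) : Prop :=
  ∃ (n : ℕ) (A : Fin n → Matrix (Fin dA) (Fin dA) ℂ)
    (B : Fin n → Matrix (Fin dB) (Fin dB) ℂ),
    (∀ i, (A i).PosSemidef) ∧ (∀ i, (B i).PosSemidef) ∧ S = ∑ i, (A i) ⊗ₖ (B i)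

/-- The difference from ignorance for a two-qubit system (`α₂ α₂ / 2 = 2`). -/
noncomputable def Ediff2
    (ρA ρB : Matrix (Fin 2) (Fin 2) ℂ)
    (M : Matrix (Fin 2 × Fin 2) (Fin 2 × Fin 2) ℂ) : ℝ :=
  2 * ((((ρA - (2 : ℂ)⁻¹ • 1) ⊗ₖ (ρB - (2 : ℂ)⁻¹ • 1)) * M).trace).re

/-- The unnormalized vector `|00⟩ + |11⟩`. -/
def unnormBell : Fin 2 × Fin 2 → ℂ :=
  fun p => if p = (0, 0) then 1 else if p = (1, 1) then 1 else 0

/-!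
Since `‖Φ‖² = 2` for `Φ = |00⟩ + |11⟩`, the matrix `P = |Φ⟩⟨Φ|` satisfies `P² = 2P`, so
`𝟙 - εP = (𝟙 - εP)² + ε(1 - 2ε)P` is positive semidefinite as soon as `ε ≤ 1/2`. Entanglement is the Peres–Horodecki criterion:
the partial transpose of a separable positive operator is positive semidefinite, whereas that of
`P` is the swap operator, with eigenvalue `-1` on the singlet `|01⟩ - |10⟩`.

For the Bell part, `X = ρᴬ - 𝟙/2` is traceless, so `E(ρᴬ, ρᴮ, 2εP - 𝟙) = 4ε Re tr(X (ρᴮ - 𝟙/2)ᵀ)`,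
which is `2ε ⟪a, b⟫` for the Bloch vectors `a` of `ρᴬ` and `b` of the state `(ρᴮ)ᵀ`; these lie
in the unit ball. Tsirelson's bound `2√2` for such vectors gives `|D| ≤ 4√2 ε ≤ 2`.
-/

open scoped InnerProductSpace

theorem Matrix.PosSemidef.one_sub_smul {𝕜 n : Type*} [RCLike 𝕜] [Fintype n] [DecidableEq n]
    {A : Matrix n n 𝕜} (hA : A.PosSemidef) {c ε : ℝ} (hAA : A * A = (c : 𝕜) • A)
    (hε : 0 ≤ ε) (hεc : ε * c ≤ 1) : (1 - (ε : 𝕜) • A).PosSemidef := by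
  have key : 1 - (ε : 𝕜) • A
      = (1 - (ε : 𝕜) • A)ᴴ * (1 - (ε : 𝕜) • A) + ((ε * (1 - ε * c) : ℝ) : 𝕜) • A := by
    rw [conjTranspose_sub, conjTranspose_one, conjTranspose_smul, hA.1.eq, RCLike.star_def,
      RCLike.conj_ofReal]
    simp only [sub_mul, mul_sub, one_mul, mul_one, smul_mul_assoc, mul_smul_comm, hAA, smul_smul]
    push_cast
    module
  rw [key]
  exact (posSemidef_conjTranspose_mul_self _).add
    (hA.smul (RCLike.ofReal_nonneg.mpr (mul_nonneg hε (by linarith))))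

theorem Matrix.vecMulVec_mul_self {α n : Type*} [CommSemiring α] [Fintype n] (v w : n → α) :
    vecMulVec v w * vecMulVec v w = (w ⬝ᵥ v) • vecMulVec v w := by
  rw [vecMulVec_mul_vecMulVec, vecMulVec_smul]

theorem star_unnormBell_dotProduct : star unnormBell ⬝ᵥ unnormBell = 2 := by
  simp [dotProduct, Fintype.sum_prod_type, unnormBell]
  norm_num

def Matrix.partialTranspose {α m n : Type*} (S : Matrix (m × n) (m × n) α) :
    Matrix (m × n) (m × n) α :=
  of fun p q => S (p.1, q.2) (q.1, p.2)

theorem Matrix.partialTranspose_sum {α m n ι : Type*} [AddCommMonoid α] (s : Finset ι)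
    (S : ι → Matrix (m × n) (m × n) α) :
    partialTranspose (∑ i ∈ s, S i) = ∑ i ∈ s, partialTranspose (S i) := by
  ext; simp [partialTranspose, Matrix.sum_apply]

theorem Matrix.partialTranspose_kronecker {α m n : Type*} [Mul α] (A : Matrix m m α)
    (B : Matrix n n α) :
    partialTranspose (A ⊗ₖ B) = A ⊗ₖ Bᵀ := by
  ext; simp [partialTranspose]

theorem SepPos.posSemidef_partialTranspose {dA dB : ℕ}
    {S : Matrix (Fin dA × Fin dB) (Fin dA × Fin dB) ℂ} (hS : SepPos S) :
    (partialTranspose S).PosSemidef := by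
  obtain ⟨n, A, B, hA, hB, rfl⟩ := hS
  rw [partialTranspose_sum]
  exact posSemidef_sum _ fun i _ => by
    rw [partialTranspose_kronecker]
    exact (hA i).kronecker (hB i).transpose

def unnormSinglet : Fin 2 × Fin 2 → ℂ :=
  fun p => if p = (0, 1) then 1 else if p = (1, 0) then -1 else 0

theorem not_posSemidef_partialTranspose_smul_bell {ε : ℝ} (hε : 0 < ε) :
    ¬ (partialTranspose ((ε : ℂ) • vecMulVec unnormBell (star unnormBell))).PosSemidef := by
  intro h
  have hψ := h.dotProduct_mulVec_nonneg unnormSinglet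
  have hval : star unnormSinglet ⬝ᵥ
      (partialTranspose ((ε : ℂ) • vecMulVec unnormBell (star unnormBell)) *ᵥ unnormSinglet)
        = ((-2 * ε : ℝ) : ℂ) := by
    simp [dotProduct, mulVec, partialTranspose, vecMulVec_apply, Fintype.sum_prod_type,
      unnormBell, unnormSinglet]
    ring
  rw [hval, Complex.zero_le_real] at hψ
  linarith

theorem abs_chsh_inner_le {E : Type*} [NormedAddCommGroup E] [InnerProductSpace ℝ E]
    {r₀ r₁ s₀ s₁ : E} (hr₀ : ‖r₀‖ ≤ 1) (hr₁ : ‖r₁‖ ≤ 1) (hs₀ : ‖s₀‖ ≤ 1) (hs₁ : ‖s₁‖ ≤ 1) :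
    |⟪r₀, s₀⟫_ℝ + ⟪r₀, s₁⟫_ℝ + ⟪r₁, s₀⟫_ℝ - ⟪r₁, s₁⟫_ℝ| ≤ 2 * √2 := by
  have hsum : ‖s₀ + s₁‖ + ‖s₀ - s₁‖ ≤ 2 * √2 := by
    have hpar := parallelogram_law_with_norm ℝ s₀ s₁
    have h8 : (2 * √2) ^ 2 = 8 := by rw [mul_pow, Real.sq_sqrt zero_le_two]; norm_num
    apply le_of_sq_le_sq _ (by positivity)
    nlinarith [sq_nonneg (‖s₀ + s₁‖ - ‖s₀ - s₁‖), norm_nonneg s₀, norm_nonneg s₁]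
  calc |⟪r₀, s₀⟫_ℝ + ⟪r₀, s₁⟫_ℝ + ⟪r₁, s₀⟫_ℝ - ⟪r₁, s₁⟫_ℝ|
      = |⟪r₀, s₀ + s₁⟫_ℝ + ⟪r₁, s₀ - s₁⟫_ℝ| := by rw [inner_add_right, inner_sub_right]; ring_nf
    _ ≤ ‖r₀‖ * ‖s₀ + s₁‖ + ‖r₁‖ * ‖s₀ - s₁‖ :=
      (abs_add_le _ _).trans (add_le_add (abs_real_inner_le_norm _ _) (abs_real_inner_le_norm _ _))
    _ ≤ ‖s₀ + s₁‖ + ‖s₀ - s₁‖ := by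
      gcongr <;> exact mul_le_of_le_one_left (norm_nonneg _) ‹_›
    _ ≤ 2 * √2 := hsum

-- The coordinates `(x, y, z)` in `ρ = (𝟙 + x σₓ + y σ_y + z σ_z) / 2`.
def blochVector (ρ : Matrix (Fin 2) (Fin 2) ℂ) : EuclideanSpace ℝ (Fin 3) :=
  !₂[2 * (ρ 1 0).re, 2 * (ρ 1 0).im, (ρ 0 0 - ρ 1 1).re]

theorem re_trace_sub_half_mul_eq_inner_blochVector {ρ σ : Matrix (Fin 2) (Fin 2) ℂ}
    (hρ : ρ.IsHermitian) (hσ : σ.IsHermitian) (hρ1 : ρ.trace = 1) (hσ1 : σ.trace = 1) :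
    (((ρ - (2 : ℂ)⁻¹ • 1) * (σ - (2 : ℂ)⁻¹ • 1)).trace).re
      = ⟪blochVector ρ, blochVector σ⟫_ℝ / 2 := by
  have hρ00 : (ρ 0 0).im = 0 := Complex.conj_eq_iff_im.mp (hρ.apply 0 0)
  have hρ11 : (ρ 1 1).im = 0 := Complex.conj_eq_iff_im.mp (hρ.apply 1 1)
  have hρ1re : (ρ 0 0).re + (ρ 1 1).re = 1 := by
    simpa [trace_fin_two] using congrArg Complex.re hρ1
  have hσ1re : (σ 0 0).re + (σ 1 1).re = 1 := by
    simpa [trace_fin_two] using congrArg Complex.re hσ1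
  simp [trace_fin_two, blochVector, PiLp.inner_apply, Fin.sum_univ_three, mul_apply,
    Fin.sum_univ_two, hρ00, hρ11, ← hρ.apply 0 1, ← hσ.apply 0 1]
  linear_combination (1 / 2 * ((σ 0 0).re + (σ 1 1).re - 1)) * hρ1re

theorem IsState.transpose {d : ℕ} {ρ : Matrix (Fin d) (Fin d) ℂ} (h : IsState ρ) :
    IsState ρᵀ :=
  ⟨h.1.transpose, by rw [trace_transpose]; exact h.2⟩

theorem IsState.norm_blochVector_le_one {ρ : Matrix (Fin 2) (Fin 2) ℂ} (h : IsState ρ) :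
    ‖blochVector ρ‖ ≤ 1 := by
  obtain ⟨hpsd, htr⟩ := h
  have hdet := (Complex.nonneg_iff.mp hpsd.det_nonneg).1
  have hρ00 : (ρ 0 0).im = 0 := Complex.conj_eq_iff_im.mp (hpsd.1.apply 0 0)
  have hρ11 : (ρ 1 1).im = 0 := Complex.conj_eq_iff_im.mp (hpsd.1.apply 1 1)
  have hρ1re : (ρ 0 0).re + (ρ 1 1).re = 1 := by
    simpa [trace_fin_two] using congrArg Complex.re htr
  rw [det_fin_two, ← hpsd.1.apply 0 1] at hdet
  rw [EuclideanSpace.norm_eq, Real.sqrt_le_one]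
  simp [blochVector, Fin.sum_univ_three, hρ00, hρ11] at hdet ⊢
  nlinarith

theorem trace_kronecker_mul_vecMulVec_unnormBell (X Y : Matrix (Fin 2) (Fin 2) ℂ) :
    ((X ⊗ₖ Y) * vecMulVec unnormBell (star unnormBell)).trace = (X * Yᵀ).trace := by
  simp [trace, mul_apply, vecMulVec_apply, Fintype.sum_prod_type, unnormBell]

theorem Ediff2_eq_inner_blochVector (ε : ℝ) {ρA ρB : Matrix (Fin 2) (Fin 2) ℂ}
    (hA : ρA.IsHermitian) (hB : ρB.IsHermitian) (hA1 : ρA.trace = 1) (hB1 : ρB.trace = 1) :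
    Ediff2 ρA ρB ((2 : ℂ) • ((ε : ℂ) • vecMulVec unnormBell (star unnormBell)) - 1)
      = 2 * ε * ⟪blochVector ρA, blochVector ρBᵀ⟫_ℝ := by
  have htraceless : (ρA - (2 : ℂ)⁻¹ • 1).trace = 0 := by simp [hA1]
  have htranspose : (ρB - (2 : ℂ)⁻¹ • 1)ᵀ = ρBᵀ - (2 : ℂ)⁻¹ • 1 := by
    rw [transpose_sub, transpose_smul, transpose_one]
  rw [Ediff2, mul_sub, mul_one, trace_sub, trace_kronecker, htraceless, zero_mul, sub_zero,
    mul_smul_comm, mul_smul_comm, trace_smul, trace_smul, trace_kronecker_mul_vecMulVec_unnormBell,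
    htranspose, smul_smul, smul_eq_mul, show (2 : ℂ) * ε = ((2 * ε : ℝ) : ℂ) by push_cast; rfl,
    Complex.re_ofReal_mul,
    re_trace_sub_half_mul_eq_inner_blochVector hA hB.transpose hA1 (by rwa [trace_transpose])]
  ring

noncomputable def dualBell (M : Matrix (Fin 2 × Fin 2) (Fin 2 × Fin 2) ℂ)
    (ρA₀ ρA₁ ρB₀ ρB₁ : Matrix (Fin 2) (Fin 2) ℂ) : ℝ :=
  Ediff2 ρA₀ ρB₀ M + Ediff2 ρA₀ ρB₁ M + Ediff2 ρA₁ ρB₀ M - Ediff2 ρA₁ ρB₁ M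

theorem abs_dualBell_le_two {ε : ℝ} (hε : 0 ≤ ε) (hε' : ε ≤ 1 / (2 * √2))
    {ρA₀ ρA₁ ρB₀ ρB₁ : Matrix (Fin 2) (Fin 2) ℂ}
    (hA₀ : IsState ρA₀) (hA₁ : IsState ρA₁) (hB₀ : IsState ρB₀) (hB₁ : IsState ρB₁) :
    |dualBell ((2 : ℂ) • ((ε : ℂ) • vecMulVec unnormBell (star unnormBell)) - 1)
      ρA₀ ρA₁ ρB₀ ρB₁| ≤ 2 := by
  rw [dualBell, Ediff2_eq_inner_blochVector ε hA₀.1.1 hB₀.1.1 hA₀.2 hB₀.2,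
    Ediff2_eq_inner_blochVector ε hA₀.1.1 hB₁.1.1 hA₀.2 hB₁.2,
    Ediff2_eq_inner_blochVector ε hA₁.1.1 hB₀.1.1 hA₁.2 hB₀.2,
    Ediff2_eq_inner_blochVector ε hA₁.1.1 hB₁.1.1 hA₁.2 hB₁.2, ← mul_add, ← mul_add, ← mul_sub,
    abs_mul, abs_of_nonneg (by positivity : 0 ≤ 2 * ε)]
  have hchsh := abs_chsh_inner_le hA₀.norm_blochVector_le_one hA₁.norm_blochVector_le_one
    hB₀.transpose.norm_blochVector_le_one hB₁.transpose.norm_blochVector_le_one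
  have hε2 : ε * (2 * √2) ≤ 1 := (le_div_iff₀ (by positivity)).mp hε'
  nlinarith

/-- for `0 < ε ≤ 1/(2√2)`, the operator
`M₁ = ε (|00⟩ + |11⟩)(⟨00| + ⟨11|)` is an effect, is not separable positive
(hence entangled), yet with `M = 2M₁ - 𝟙` the dual Bell–CHSH inequality
`-2 ≤ D ≤ 2` holds for all qubit states. -/
theorem small_entangled_effect_satisfies_dual_bell
    (ε : ℝ) (hε : 0 < ε) (hε' : ε ≤ 1 / (2 * Real.sqrt 2)) :
    ((ε : ℂ) • vecMulVec unnormBell (star unnormBell)).PosSemidef ∧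
    ((1 : Matrix (Fin 2 × Fin 2) (Fin 2 × Fin 2) ℂ)
        - (ε : ℂ) • vecMulVec unnormBell (star unnormBell)).PosSemidef ∧
    ¬ SepPos ((ε : ℂ) • vecMulVec unnormBell (star unnormBell)) ∧
    (∀ ρA₀ ρA₁ ρB₀ ρB₁ : Matrix (Fin 2) (Fin 2) ℂ,
      IsState ρA₀ → IsState ρA₁ → IsState ρB₀ → IsState ρB₁ →
      -2 ≤ Ediff2 ρA₀ ρB₀ ((2 : ℂ) • ((ε : ℂ) • vecMulVec unnormBell (star unnormBell)) - 1)
          + Ediff2 ρA₀ ρB₁ ((2 : ℂ) • ((ε : ℂ) • vecMulVec unnormBell (star unnormBell)) - 1)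
          + Ediff2 ρA₁ ρB₀ ((2 : ℂ) • ((ε : ℂ) • vecMulVec unnormBell (star unnormBell)) - 1)
          - Ediff2 ρA₁ ρB₁ ((2 : ℂ) • ((ε : ℂ) • vecMulVec unnormBell (star unnormBell)) - 1) ∧
        Ediff2 ρA₀ ρB₀ ((2 : ℂ) • ((ε : ℂ) • vecMulVec unnormBell (star unnormBell)) - 1)
          + Ediff2 ρA₀ ρB₁ ((2 : ℂ) • ((ε : ℂ) • vecMulVec unnormBell (star unnormBell)) - 1)
          + Ediff2 ρA₁ ρB₀ ((2 : ℂ) • ((ε : ℂ) • vecMulVec unnormBell (star unnormBell)) - 1)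
          - Ediff2 ρA₁ ρB₁ ((2 : ℂ) • ((ε : ℂ) • vecMulVec unnormBell (star unnormBell)) - 1) ≤ 2) := by
  have hBell : vecMulVec unnormBell (star unnormBell) * vecMulVec unnormBell (star unnormBell)
      = ((2 : ℝ) : ℂ) • vecMulVec unnormBell (star unnormBell) := by
    rw [vecMulVec_mul_self, star_unnormBell_dotProduct, Complex.ofReal_ofNat]
  have hε2 : ε * 2 ≤ 1 := by
    have := (le_div_iff₀ (by positivity)).mp hε'
    nlinarith [Real.one_le_sqrt.mpr one_le_two]
  exact ⟨(posSemidef_vecMulVec_self_star _).smul (by exact_mod_cast hε.le),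
    (posSemidef_vecMulVec_self_star _).one_sub_smul hBell hε.le hε2,
    fun h => not_posSemidef_partialTranspose_smul_bell hε h.posSemidef_partialTranspose,
    fun _ _ _ _ hA₀ hA₁ hB₀ hB₁ => abs_le.mp (abs_dualBell_le_two hε.le hε' hA₀ hA₁ hB₀ hB₁)⟩
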